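/- Let δ ∈ (0,1) and let B be a symmetric real d×d matrix. Then (B − β_δ(B)) : (I − g_δ′(B)) ≥ 0, where the colon denotes the Frobenius inner product. -/

import Mathlib

open Matrix

/-- The Frobenius inner product of two real matrices. -/
noncomputable def frobInner {d : ℕ} (A C : Matrix (Fin d) (Fin d) ℝ) : ℝ :=
  ∑ i, ∑ j, A i j * C i j

/-- The matrix obtained by applying a scalar function `F : ℝ → ℝ` to the spectrum of a
symmetric (Hermitian) real matrix `B`. -/
noncomputable def specApply {d : ℕ} (F : ℝ → ℝ) {B : Matrix (Fin d) (Fin d) ℝ}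
    (hB : B.IsHermitian) : Matrix (Fin d) (Fin d) ℝ :=
  (hB.eigenvectorUnitary : Matrix (Fin d) (Fin d) ℝ) *
    Matrix.diagonal (fun i => F (hB.eigenvalues i)) *
    star (hB.eigenvectorUnitary : Matrix (Fin d) (Fin d) ℝ)

/-! Both matrices in the pairing are functions of `B`, so they are diagonal in one common
eigenbasis and the pairing equals `∑ᵢ (λᵢ - max λᵢ δ) (1 - 1 / max λᵢ δ)`. Each summand is
zero when `λᵢ ≥ δ` and a product of two nonpositive factors when `λᵢ < δ ≤ 1`. -/

lemma frobInner_eq_trace {d : ℕ} (A C : Matrix (Fin d) (Fin d) ℝ) :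
    frobInner A C = trace (A * Cᵀ) := by
  simp only [frobInner, trace, diag, mul_apply, transpose_apply]

section specApply

variable {d : ℕ} {B : Matrix (Fin d) (Fin d) ℝ} (hB : B.IsHermitian)

lemma specApply_id : specApply id hB = B := by
  simpa [specApply, Function.comp_def] using hB.spectral_theorem.symm

lemma specApply_one : specApply (fun _ => 1) hB = 1 := by
  simp [specApply, diagonal_one, (mem_unitaryGroup_iff).mp hB.eigenvectorUnitary.2]

lemma specApply_sub (F G : ℝ → ℝ) :
    specApply F hB - specApply G hB = specApply (fun s => F s - G s) hB := by
  simp [specApply, ← Matrix.sub_mul, ← Matrix.mul_sub, diagonal_sub]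

lemma sub_specApply (F : ℝ → ℝ) : B - specApply F hB = specApply (fun s => s - F s) hB := by
  calc B - specApply F hB = specApply id hB - specApply F hB := by rw [specApply_id]
    _ = specApply (fun s => s - F s) hB := specApply_sub hB id F

lemma one_sub_specApply (F : ℝ → ℝ) :
    1 - specApply F hB = specApply (fun s => 1 - F s) hB := by
  calc 1 - specApply F hB = specApply (fun _ => 1) hB - specApply F hB := by rw [specApply_one]
    _ = specApply (fun s => 1 - F s) hB := specApply_sub hB _ F

lemma specApply_mul (F G : ℝ → ℝ) :
    specApply F hB * specApply G hB = specApply (fun s => F s * G s) hB := by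
  have hU := (mem_unitaryGroup_iff').mp hB.eigenvectorUnitary.2
  simp only [specApply, Matrix.mul_assoc]
  congr 1
  rw [← Matrix.mul_assoc (star _), hU, Matrix.one_mul, ← Matrix.mul_assoc,
    diagonal_mul_diagonal]

lemma transpose_specApply (F : ℝ → ℝ) : (specApply F hB)ᵀ = specApply F hB := by
  rw [← conjTranspose_eq_transpose_of_trivial]
  simp [specApply, star_eq_conjTranspose, Matrix.mul_assoc]

lemma trace_specApply (F : ℝ → ℝ) : trace (specApply F hB) = ∑ i, F (hB.eigenvalues i) := by
  rw [specApply, trace_mul_cycle, (mem_unitaryGroup_iff').mp hB.eigenvectorUnitary.2,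
    Matrix.one_mul, trace_diagonal]

lemma frobInner_specApply (F G : ℝ → ℝ) :
    frobInner (specApply F hB) (specApply G hB)
      = ∑ i, F (hB.eigenvalues i) * G (hB.eigenvalues i) := by
  rw [frobInner_eq_trace, transpose_specApply, specApply_mul, trace_specApply]

end specApply

lemma sub_max_mul_one_sub_inv_max_nonneg {δ : ℝ} (hδ₀ : 0 < δ) (hδ₁ : δ ≤ 1) (s : ℝ) :
    0 ≤ (s - max s δ) * (1 - 1 / max s δ) := by
  rcases le_or_gt δ s with h | h
  · simp [max_eq_left h]
  · rw [max_eq_right h.le]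
    have : 1 ≤ 1 / δ := (le_div_iff₀ hδ₀).mpr (by linarith)
    exact mul_nonneg_of_nonpos_of_nonpos (by linarith) (by linarith)

theorem frobInner_sub_cutoff_nonneg_general {d : ℕ} (δ : ℝ) (hδ : δ ∈ Set.Ioo (0:ℝ) 1)
    (B : Matrix (Fin d) (Fin d) ℝ) (hB : B.IsHermitian) :
    0 ≤ frobInner (B - specApply (fun s => max s δ) hB)
      ((1 : Matrix (Fin d) (Fin d) ℝ) - specApply (fun s => 1 / max s δ) hB) := by
  rw [sub_specApply, one_sub_specApply, frobInner_specApply]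
  exact Finset.sum_nonneg fun i _ =>
    sub_max_mul_one_sub_inv_max_nonneg hδ.1 hδ.2.le (hB.eigenvalues i)

/-- For `δ ∈ (0,1)` and a symmetric real `d × d` matrix `B`,
`(B - β_δ(B)) : (I - g_δ'(B)) ≥ 0`, where `β_δ(s) = max s δ`, `g_δ'(s) = 1 / max s δ`,
and `:` denotes the Frobenius inner product. -/
theorem frobInner_sub_cutoff_nonneg {d : ℕ} (hd : 0 < d) (δ : ℝ) (hδ : δ ∈ Set.Ioo (0:ℝ) 1)
    (B : Matrix (Fin d) (Fin d) ℝ) (hB : B.IsHermitian) :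
    0 ≤ frobInner (B - specApply (fun s => max s δ) hB)
      ((1 : Matrix (Fin d) (Fin d) ℝ) - specApply (fun s => 1 / max s δ) hB) :=
  frobInner_sub_cutoff_nonneg_general δ hδ B hB
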